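/- Let R be a finite commutative local ring, G = GL_n(R), U and V the upper and lower unitriangular subgroups, L the diagonal subgroup, and w a permutation matrix. Then the map x ↦ e_V·x from e_{U^w}e_{V^w}·C[G] to e_V·e_U·C[G] is an isomorphism of C[L]-C[G] bimodules. -/

import Mathlib

open Matrix MonoidAlgebra

namespace PS

variable {n : ℕ} {R : Type*} [CommRing R]

/-- `g` is upper unitriangular. -/
def IsU (g : GL (Fin n) R) : Prop :=
  (∀ i : Fin n, (g : Matrix (Fin n) (Fin n) R) i i = 1) ∧
    ∀ i j : Fin n, j < i → (g : Matrix (Fin n) (Fin n) R) i j = 0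

/-- `g` is lower unitriangular. -/
def IsV (g : GL (Fin n) R) : Prop :=
  (∀ i : Fin n, (g : Matrix (Fin n) (Fin n) R) i i = 1) ∧
    ∀ i j : Fin n, i < j → (g : Matrix (Fin n) (Fin n) R) i j = 0

/-- `g` is diagonal. -/
def IsL (g : GL (Fin n) R) : Prop :=
  ∀ i j : Fin n, i ≠ j → (g : Matrix (Fin n) (Fin n) R) i j = 0

/-- `g` is a permutation matrix. -/
def IsW (g : GL (Fin n) R) : Prop :=
  ∃ σ : Equiv.Perm (Fin n), (g : Matrix (Fin n) (Fin n) R) = σ.permMatrix R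

def Uset (n : ℕ) (R : Type*) [CommRing R] : Set (GL (Fin n) R) := {g | IsU g}
def Vset (n : ℕ) (R : Type*) [CommRing R] : Set (GL (Fin n) R) := {g | IsV g}
def Lset (n : ℕ) (R : Type*) [CommRing R] : Set (GL (Fin n) R) := {g | IsL g}
def Wset (n : ℕ) (R : Type*) [CommRing R] : Set (GL (Fin n) R) := {g | IsW g}

/-- the diagonal element of `GL n R` with unit entries `d`. -/
def diagGL (d : Fin n → Rˣ) : GL (Fin n) R :=
  ⟨Matrix.diagonal fun i => (d i : R), Matrix.diagonal fun i => ((d i)⁻¹ : Rˣ),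
   by rw [Matrix.diagonal_mul_diagonal]; convert Matrix.diagonal_one using 2; simp,
   by rw [Matrix.diagonal_mul_diagonal]; convert Matrix.diagonal_one using 2; simp⟩

/-- the permutation matrix of `σ`, as an element of `GL n R`. -/
def permGL (σ : Equiv.Perm (Fin n)) : GL (Fin n) R :=
  ⟨σ.permMatrix R, (σ⁻¹).permMatrix R,
   by
    simp only [Equiv.Perm.permMatrix, ← PEquiv.toMatrix_trans, ← Equiv.toPEquiv_trans]
    simp [Equiv.Perm.inv_def, Equiv.self_trans_symm, Equiv.symm_trans_self, Equiv.toPEquiv_refl, PEquiv.toMatrix_refl],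
   by
    simp only [Equiv.Perm.permMatrix, ← PEquiv.toMatrix_trans, ← Equiv.toPEquiv_trans]
    simp [Equiv.Perm.inv_def, Equiv.self_trans_symm, Equiv.symm_trans_self, Equiv.toPEquiv_refl, PEquiv.toMatrix_refl]⟩

/-- `H^w = w⁻¹ H w`, as a subset of the group. -/
def conjSet {G : Type*} [Group G] (S : Set G) (w : G) : Set G := {g | w * g * w⁻¹ ∈ S}

/-- the set of adjacent transpositions (standard Coxeter generators) in `S_n`. -/
def adjT (n : ℕ) : Set (Equiv.Perm (Fin n)) :=
  {σ | ∃ i j : Fin n, (i : ℕ) + 1 = (j : ℕ) ∧ σ = Equiv.swap i j}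

/-- the Coxeter word length of a permutation, with respect to adjacent transpositions. -/
noncomputable def permLength {n : ℕ} (σ : Equiv.Perm (Fin n)) : ℕ :=
  sInf {k | ∃ l : List (Equiv.Perm (Fin n)),
    l.length = k ∧ (∀ τ ∈ l, τ ∈ adjT n) ∧ l.prod = σ}

open scoped Classical in
/-- the averaging element `e_S = |S|⁻¹ ∑_{h ∈ S} h` in the complex group algebra. -/
noncomputable def eAvg {G : Type*} [Group G] [Fintype G] (S : Set G) : MonoidAlgebra ℂ G :=
  (S.toFinset.card : ℂ)⁻¹ • ∑ h ∈ S.toFinset, MonoidAlgebra.of ℂ G h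

/-- the reduction-mod-`m` homomorphism `GL_n(R) → GL_n(R/m)` for a local ring `R`. -/
noncomputable def red (n : ℕ) (R : Type*) [CommRing R] [IsLocalRing R] :
    GL (Fin n) R →* GL (Fin n) (IsLocalRing.ResidueField R) :=
  Matrix.GeneralLinearGroup.map (IsLocalRing.residue R)

/-- the congruence kernel `G_0 = ker (GL_n(R) → GL_n(R/m))`. -/
noncomputable def G0 (n : ℕ) (R : Type*) [CommRing R] [IsLocalRing R] : Set (GL (Fin n) R) :=
  {g | red n R g = 1}

variable [Fintype R] [DecidableEq R]

/-- the primitive idempotent `e_χ = |L|⁻¹ ∑_{l ∈ L} χ(l)⁻¹ l` of `C[L] ⊆ C[G]` attached to the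
character `χ` of `L ≅ (Rˣ)^n`. -/
noncomputable def eChi (χ : (Fin n → Rˣ) →* ℂˣ) : MonoidAlgebra ℂ (GL (Fin n) R) :=
  (Fintype.card (Fin n → Rˣ) : ℂ)⁻¹ •
    ∑ d : Fin n → Rˣ, (((χ d)⁻¹ : ℂˣ) : ℂ) • MonoidAlgebra.of ℂ (GL (Fin n) R) (diagGL d)

/-- the representation `i(χ) ≅ C[G] e_U e_V e_χ`, as a `ℂ`-subspace of `C[G]`
(with `G` acting by left multiplication). -/
noncomputable def Vrep (n : ℕ) (R : Type*) [CommRing R] [Fintype R] [DecidableEq R]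
    (χ : (Fin n → Rˣ) →* ℂˣ) : Submodule ℂ (MonoidAlgebra ℂ (GL (Fin n) R)) :=
  LinearMap.range (LinearMap.mulRight ℂ (eAvg (Uset n R) * eAvg (Vset n R) * eChi χ))

/-- the space `Hom_G(i(χ), i(σ))` of `G`-equivariant linear maps. -/
noncomputable def HomG (n : ℕ) (R : Type*) [CommRing R] [Fintype R] [DecidableEq R]
    (χ σ : (Fin n → Rˣ) →* ℂˣ) :
    Submodule ℂ (↥(Vrep n R χ) →ₗ[ℂ] ↥(Vrep n R σ)) where
  carrier := {f | ∀ (g : GL (Fin n) R) (x y : Vrep n R χ),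
    (x : MonoidAlgebra ℂ (GL (Fin n) R)) = MonoidAlgebra.of ℂ (GL (Fin n) R) g * (y : MonoidAlgebra ℂ (GL (Fin n) R)) →
    ((f x : Vrep n R σ) : MonoidAlgebra ℂ (GL (Fin n) R)) = MonoidAlgebra.of ℂ (GL (Fin n) R) g * ((f y : Vrep n R σ) : MonoidAlgebra ℂ (GL (Fin n) R))}
  add_mem' := by
    intro f g hf hg k x y h
    simp only [LinearMap.add_apply, Submodule.coe_add, hf k x y h, hg k x y h, mul_add]
  zero_mem' := by intro k x y h; simp
  smul_mem' := by
    intro c f hf k x y h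
    simp only [LinearMap.smul_apply, Submodule.coe_smul, hf k x y h, Algebra.mul_smul_comm]

end PS

/-!
Write `A₁ = U ⊓ U^w`, `A₂ = U ⊓ V^w`, `A₃ = V ⊓ U^w`, `A₄ = V ⊓ V^w`. Each of `U`, `V`, `U^w`,
`V^w` is the unitriangular group of some total order on the indices, so an intersection of two
of them is a pattern group, of order `|R|` to the number of its free entries. Counting entries
shows that each of the four groups is the product, with trivial intersection and in either order,
of its intersections with the other pair: `U = A₁A₂ = A₂A₁`, `U^w = A₃A₁ = A₁A₃`, and so on.
Hence `e_U = e_{A₁} e_{A₂}` etc., whence `e_V e_{U^w} e_{V^w} = e_V e_U e_{A₄}` and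
`e_{U^w} e_V e_U = e_{U^w} e_{V^w} e_{A₂}`: left multiplication by `e_V` and by `e_{U^w}` map the
two right ideals into each other. Both maps are injective. If `x = e_{U^w} e_{V^w} y` and
`e_V x = 0`, then `e_{A₄} x = e_V x = 0` because `e_{A₃} x = x`, so `e_{V^w} x = 0`; as averaging
idempotents are self-adjoint for the inner product making `G` orthonormal,
`⟨x, x⟩ = ⟨y, e_{V^w} x⟩ = 0`. Two injections between finite-dimensional spaces are bijective.
Finally, diagonal matrices normalize `V`, so `e_V` commutes with them.
-/

theorem LinearMap.bijOn_of_mapsTo_of_disjoint_ker {K V : Type*} [DivisionRing K] [AddCommGroup V]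
    [Module K V] {S T : Submodule K V} [FiniteDimensional K T] {f g : V →ₗ[K] V}
    (hf : Set.MapsTo f S T) (hg : Set.MapsTo g T S)
    (hfS : Disjoint S (LinearMap.ker f)) (hgT : Disjoint T (LinearMap.ker g)) :
    Set.BijOn f S T := by
  refine ⟨hf, LinearMap.injOn_of_disjoint_ker le_rfl hfS, fun t ht => ?_⟩
  let fg : T →ₗ[K] T := (f ∘ₗ g).restrict fun x hx => hf (hg hx)
  have hfg : Function.Injective fg := fun x y hxy =>
    Subtype.ext <| LinearMap.injOn_of_disjoint_ker le_rfl hgT x.2 y.2 <|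
      LinearMap.injOn_of_disjoint_ker le_rfl hfS (hg x.2) (hg y.2) (congrArg Subtype.val hxy)
  obtain ⟨s, hs⟩ := LinearMap.injective_iff_surjective.mp hfg ⟨t, ht⟩
  exact ⟨g s, hg s.2, congrArg Subtype.val hs⟩

namespace PS

open scoped InnerProductSpace
open OrderDual

section SplitsAlong

variable {Γ : Type*} [Group Γ]

structure SplitsAlong (X Y Z : Subgroup Γ) : Prop where
  disjoint : Disjoint (X ⊓ Y) (X ⊓ Z)
  card_mul_card : Nat.card ↥(X ⊓ Y) * Nat.card ↥(X ⊓ Z) = Nat.card X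

theorem SplitsAlong.symm {X Y Z : Subgroup Γ} (h : SplitsAlong X Y Z) : SplitsAlong X Z Y :=
  ⟨h.disjoint.symm, by rw [mul_comm, h.card_mul_card]⟩

end SplitsAlong

section GroupAlgebra

open scoped Classical

variable {Γ : Type*} [Group Γ] [Fintype Γ]

theorem eAvg_subgroup (H : Subgroup Γ) :
    eAvg (H : Set Γ) = (Nat.card H : ℂ)⁻¹ • ∑ h : H, MonoidAlgebra.of ℂ Γ h := by
  unfold eAvg
  rw [Set.toFinset_card, Fintype.card_eq_nat_card]
  congr 1
  exact Finset.sum_subtype _ (fun _ => Set.mem_toFinset) _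

theorem natCast_card_subgroup_ne_zero (H : Subgroup Γ) : (Nat.card H : ℂ) ≠ 0 :=
  Nat.cast_ne_zero.mpr Nat.card_pos.ne'

theorem of_mul_eAvg {H : Subgroup Γ} {g : Γ} (hg : g ∈ H) :
    MonoidAlgebra.of ℂ Γ g * eAvg H = eAvg H := by
  rw [eAvg_subgroup, mul_smul_comm, Finset.mul_sum]
  congr 1
  exact Fintype.sum_equiv (Equiv.mulLeft ⟨g, hg⟩) _ _ fun h => (map_mul _ _ _).symm

theorem eAvg_mul_of {H : Subgroup Γ} {g : Γ} (hg : g ∈ H) :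
    eAvg H * MonoidAlgebra.of ℂ Γ g = eAvg H := by
  rw [eAvg_subgroup, smul_mul_assoc, Finset.sum_mul]
  congr 1
  exact Fintype.sum_equiv (Equiv.mulRight ⟨g, hg⟩) _ _ fun h => (map_mul _ _ _).symm

theorem eAvg_mul_eAvg_of_le {K H : Subgroup Γ} (hKH : K ≤ H) :
    eAvg (K : Set Γ) * eAvg H = eAvg H := by
  rw [eAvg_subgroup K, smul_mul_assoc, Finset.sum_mul,
    Finset.sum_congr rfl fun k _ => of_mul_eAvg (hKH k.2), Finset.sum_const, Finset.card_univ,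
    ← Nat.cast_smul_eq_nsmul ℂ, smul_smul, Fintype.card_eq_nat_card,
    inv_mul_cancel₀ (natCast_card_subgroup_ne_zero K), one_smul]

theorem eAvg_mul_eAvg_of_le' {K H : Subgroup Γ} (hKH : K ≤ H) :
    eAvg (H : Set Γ) * eAvg K = eAvg H := by
  rw [eAvg_subgroup K, mul_smul_comm, Finset.mul_sum,
    Finset.sum_congr rfl fun k _ => eAvg_mul_of (hKH k.2), Finset.sum_const, Finset.card_univ,
    ← Nat.cast_smul_eq_nsmul ℂ, smul_smul, Fintype.card_eq_nat_card,
    inv_mul_cancel₀ (natCast_card_subgroup_ne_zero K), one_smul]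

theorem eAvg_mul_eAvg_self (H : Subgroup Γ) : eAvg (H : Set Γ) * eAvg H = eAvg H :=
  eAvg_mul_eAvg_of_le le_rfl

theorem eAvg_mul_eAvg_of_disjoint {A B H : Subgroup Γ} (hA : A ≤ H) (hB : B ≤ H)
    (hAB : Disjoint A B) (hcard : Nat.card A * Nat.card B = Nat.card H) :
    eAvg (A : Set Γ) * eAvg B = eAvg H := by
  let mul : A × B → H := fun p => ⟨p.1 * p.2, H.mul_mem (hA p.1.2) (hB p.2.2)⟩
  have hmul : Function.Bijective mul :=
    (Nat.bijective_iff_injective_and_card mul).mpr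
      ⟨fun p q hpq => Subgroup.mul_injective_of_disjoint hAB (congrArg Subtype.val hpq),
        by rw [Nat.card_prod, hcard]⟩
  rw [eAvg_subgroup, eAvg_subgroup, eAvg_subgroup, smul_mul_smul_comm, Finset.sum_mul_sum,
    ← Finset.sum_product', ← mul_inv, ← Nat.cast_mul, hcard]
  congr 1
  exact Fintype.sum_bijective mul hmul _ _ fun p => (map_mul _ _ _).symm

theorem SplitsAlong.eAvg_eq {X Y Z : Subgroup Γ} (h : SplitsAlong X Y Z) :
    eAvg (X : Set Γ) = eAvg ↑(X ⊓ Y) * eAvg ↑(X ⊓ Z) :=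
  (eAvg_mul_eAvg_of_disjoint inf_le_left inf_le_left h.disjoint h.card_mul_card).symm

theorem of_mul_eAvg_of_mem_normalizer {H : Subgroup Γ} {l : Γ}
    (hl : l ∈ Subgroup.normalizer (H : Set Γ)) :
    MonoidAlgebra.of ℂ Γ l * eAvg H = eAvg H * MonoidAlgebra.of ℂ Γ l := by
  let conj : H ≃ H :=
    { toFun := fun h => ⟨l * h * l⁻¹, (Subgroup.mem_normalizer_iff.mp hl h).mp h.2⟩
      invFun := fun h =>
        ⟨l⁻¹ * h * l, by simpa using (Subgroup.mem_normalizer_iff''.mp hl h).mp h.2⟩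
      left_inv := fun h => by ext; simp [mul_assoc]
      right_inv := fun h => by ext; simp [mul_assoc] }
  rw [eAvg_subgroup, mul_smul_comm, smul_mul_assoc, Finset.mul_sum, Finset.sum_mul]
  congr 1
  exact Fintype.sum_equiv conj _ _ fun h => by simp [conj, mul_assoc]

end GroupAlgebra

section Positivity

variable {Γ : Type*} [Fintype Γ]

noncomputable def toL2 : MonoidAlgebra ℂ Γ ≃ₗ[ℂ] EuclideanSpace ℂ Γ :=
  (MonoidAlgebra.basis Γ ℂ).equivFun.trans (WithLp.linearEquiv 2 ℂ (Γ → ℂ)).symm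

@[simp]
theorem toL2_apply (x : MonoidAlgebra ℂ Γ) (g : Γ) : toL2 x g = x.coeff g := rfl

variable [Group Γ]

theorem inner_toL2_of_mul (g : Γ) (x y : MonoidAlgebra ℂ Γ) :
    ⟪toL2 (MonoidAlgebra.of ℂ Γ g * x), toL2 y⟫_ℂ =
      ⟪toL2 x, toL2 (MonoidAlgebra.of ℂ Γ g⁻¹ * y)⟫_ℂ := by
  simp only [PiLp.inner_apply, toL2_apply, MonoidAlgebra.of_apply,
    MonoidAlgebra.coeff_single_mul_apply, one_mul, inv_inv]
  exact Fintype.sum_equiv (Equiv.mulLeft g⁻¹) _ _ fun h => by simp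

open scoped Classical in
theorem inner_toL2_eAvg_mul (H : Subgroup Γ) (x y : MonoidAlgebra ℂ Γ) :
    ⟪toL2 (eAvg H * x), toL2 y⟫_ℂ = ⟪toL2 x, toL2 (eAvg H * y)⟫_ℂ := by
  simp only [eAvg_subgroup, smul_mul_assoc, Finset.sum_mul, map_smul, map_sum, inner_smul_left,
    inner_smul_right, sum_inner, inner_sum, inner_toL2_of_mul, map_inv₀, Complex.conj_natCast]
  congr 1
  exact Fintype.sum_equiv (Equiv.inv H) _ _ fun h => rfl

theorem eq_zero_of_eAvg_mul_eq_zero {S T : Subgroup Γ} {y : MonoidAlgebra ℂ Γ}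
    (h : eAvg (T : Set Γ) * (eAvg S * eAvg T * y) = 0) : eAvg (S : Set Γ) * eAvg T * y = 0 := by
  set x := eAvg (S : Set Γ) * eAvg T * y with hx
  have hSx : eAvg (S : Set Γ) * x = x := by rw [hx, ← mul_assoc, ← mul_assoc, eAvg_mul_eAvg_self]
  have : ⟪toL2 x, toL2 x⟫_ℂ = 0 :=
    calc ⟪toL2 x, toL2 x⟫_ℂ = ⟪toL2 (eAvg T * y), toL2 (eAvg S * x)⟫_ℂ := by
          rw [← inner_toL2_eAvg_mul, hx, mul_assoc]
      _ = ⟪toL2 y, toL2 (eAvg T * x)⟫_ℂ := by rw [hSx, inner_toL2_eAvg_mul]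
      _ = 0 := by rw [h, map_zero, inner_zero_right]
  exact toL2.map_eq_zero_iff.mp (inner_self_eq_zero.mp this)

end Positivity

section Splitting

variable {Γ : Type*} [Group Γ] [Fintype Γ] {P Q S T : Subgroup Γ}

theorem eAvg_mul_eAvg_mul_eAvg_of_splitsAlong (hQ : SplitsAlong Q S T)
    (hS : SplitsAlong S P Q) (hT : SplitsAlong T P Q) :
    eAvg (P : Set Γ) * eAvg S * eAvg T = eAvg P * eAvg Q * eAvg ↑(T ⊓ P) := by
  rw [hS.eAvg_eq, hT.symm.eAvg_eq, hQ.eAvg_eq, inf_comm S Q, inf_comm T Q]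
  calc eAvg (P : Set Γ) * (eAvg ↑(S ⊓ P) * eAvg ↑(Q ⊓ S)) * (eAvg ↑(Q ⊓ T) * eAvg ↑(T ⊓ P))
      = eAvg (P : Set Γ) * eAvg ↑(S ⊓ P) * (eAvg ↑(Q ⊓ S) * eAvg ↑(Q ⊓ T)) * eAvg ↑(T ⊓ P) := by
        simp only [mul_assoc]
    _ = _ := by rw [eAvg_mul_eAvg_of_le' inf_le_right]

theorem eq_zero_of_eAvg_mul_eq_zero_of_splitsAlong (hP : SplitsAlong P S T)
    (hT : SplitsAlong T P Q) {y : MonoidAlgebra ℂ Γ}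
    (h : eAvg (P : Set Γ) * (eAvg S * eAvg T * y) = 0) : eAvg (S : Set Γ) * eAvg T * y = 0 := by
  refine eq_zero_of_eAvg_mul_eq_zero ?_
  set x := eAvg (S : Set Γ) * eAvg T * y with hx
  have hPS : eAvg ↑(P ⊓ S) * x = x := by
    rw [hx, ← mul_assoc, ← mul_assoc, eAvg_mul_eAvg_of_le inf_le_right]
  rw [hP.symm.eAvg_eq, mul_assoc, hPS, inf_comm] at h
  rw [hT.symm.eAvg_eq, mul_assoc, h, mul_zero]

theorem bijOn_eAvg_mul_of_splitsAlong (hP : SplitsAlong P S T) (hQ : SplitsAlong Q S T)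
    (hS : SplitsAlong S P Q) (hT : SplitsAlong T P Q) :
    Set.BijOn (fun x => eAvg (P : Set Γ) * x)
      {x | ∃ y, x = eAvg (S : Set Γ) * eAvg T * y}
      {x | ∃ y, x = eAvg (P : Set Γ) * eAvg Q * y} := by
  have hI (a : MonoidAlgebra ℂ Γ) :
      {x | ∃ y, x = a * y} = (LinearMap.range (LinearMap.mulLeft ℂ a) : Set _) := by
    ext x; simp [eq_comm]
  rw [hI, hI]
  refine LinearMap.bijOn_of_mapsTo_of_disjoint_ker (f := LinearMap.mulLeft ℂ (eAvg (P : Set Γ)))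
    (g := LinearMap.mulLeft ℂ (eAvg (S : Set Γ))) ?_ ?_ ?_ ?_
  · rintro _ ⟨y, rfl⟩
    refine ⟨eAvg ↑(T ⊓ P) * y, ?_⟩
    simp only [LinearMap.mulLeft_apply, ← mul_assoc]
    rw [eAvg_mul_eAvg_mul_eAvg_of_splitsAlong hQ hS hT]
  · rintro _ ⟨y, rfl⟩
    refine ⟨eAvg ↑(Q ⊓ S) * y, ?_⟩
    simp only [LinearMap.mulLeft_apply, ← mul_assoc]
    rw [eAvg_mul_eAvg_mul_eAvg_of_splitsAlong hT hP hQ]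
  · rw [LinearMap.disjoint_ker]
    rintro _ ⟨y, rfl⟩
    exact eq_zero_of_eAvg_mul_eq_zero_of_splitsAlong hP hT
  · rw [LinearMap.disjoint_ker]
    rintro _ ⟨y, rfl⟩
    exact eq_zero_of_eAvg_mul_eq_zero_of_splitsAlong hS hQ

end Splitting

section Unitriangular

variable {m : Type*} [Fintype m] [DecidableEq m] {R : Type*} [CommRing R]
  {α β : Type*} [LinearOrder α] [LinearOrder β]

variable (R) in
def patternSet (E : m → m → Prop) : Set (GL m R) :=
  {g | ∀ i j, ¬ E i j → (g : Matrix m m R) i j = (1 : Matrix m m R) i j}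

theorem mul_mem_patternSet {E : m → m → Prop} (htrans : ∀ {i j k}, E i j → E j k → E i k)
    {g h : GL m R} (hg : g ∈ patternSet R E) (hh : h ∈ patternSet R E) :
    g * h ∈ patternSet R E := by
  intro i j hij
  -- compare the expansion of `(g * h) i j` termwise with that of `(1 * 1) i j`
  rw [Units.val_mul, Matrix.mul_apply, ← Matrix.one_mul (1 : Matrix m m R), Matrix.mul_apply]
  refine Finset.sum_congr rfl fun k _ => ?_
  by_cases hik : E i k
  · have hkj : ¬ E k j := fun hkj => hij (htrans hik hkj)
    rw [hh k j hkj]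
    by_cases hk : k = j
    · subst hk; rw [hg i k hij]
    · simp [Matrix.one_apply_ne hk]
  · rw [hg i k hik]
    by_cases hk : i = k
    · subst hk; rw [hh i j hij]
    · simp [Matrix.one_apply_ne hk]

theorem coe_conj_of_permMatrix {w : GL m R} {σ : Equiv.Perm m}
    (hw : (w : Matrix m m R) = σ.permMatrix R) (g : GL m R) :
    ((w * g * w⁻¹ : GL m R) : Matrix m m R) = (g : Matrix m m R).submatrix σ σ := by
  have hw' : ((w⁻¹ : GL m R) : Matrix m m R) = σ⁻¹.permMatrix R :=
    Units.inv_eq_of_mul_eq_one_right (by rw [hw, ← Matrix.permMatrix_mul, inv_mul_cancel,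
      Matrix.permMatrix_one])
  rw [Units.val_mul, Units.val_mul, hw, hw', PEquiv.toMatrix_toPEquiv_mul,
    PEquiv.mul_toMatrix_toPEquiv]
  rfl

theorem card_patternSet {E : m → m → Prop} {b : m → α}
    (hE : ∀ i j, E i j → b i < b j) :
    Nat.card (patternSet R E) = Nat.card R ^ Nat.card {p : m × m // E p.1 p.2} := by
  classical
  let M : ({p : m × m // E p.1 p.2} → R) → Matrix m m R := fun f i j =>
    if h : E i j then f ⟨(i, j), h⟩ else (1 : Matrix m m R) i j
  have hM (f) : IsUnit (M f) := by
    have htri : (M f).BlockTriangular b := fun i j hji => by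
      have hne : i ≠ j := by rintro rfl; exact lt_irrefl _ hji
      simp only [M, dif_neg fun h => (hE i j h).asymm hji, Matrix.one_apply_ne hne]
    have hblock (a : α) : (M f).toSquareBlock b a = (1 : Matrix m m R).toSquareBlock b a := by
      ext ⟨i, hi⟩ ⟨j, hj⟩
      exact dif_neg fun h => (hE i j h).ne (hi.trans hj.symm)
    rw [Matrix.isUnit_iff_isUnit_det, htri.det, Finset.prod_congr rfl fun a _ => by rw [hblock a],
      ← Matrix.blockTriangular_one.det, Matrix.det_one]
    exact isUnit_one
  let e : patternSet R E ≃ ({p : m × m // E p.1 p.2} → R) :=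
    { toFun := fun g p => (g.1 : Matrix m m R) p.1.1 p.1.2
      invFun := fun f => ⟨(hM f).unit, fun i j hij => by rw [IsUnit.unit_spec]; exact dif_neg hij⟩
      left_inv := fun g => Subtype.ext <| Units.ext <| by
        rw [IsUnit.unit_spec]
        ext i j
        by_cases h : E i j
        · exact dif_pos h
        · exact (dif_neg h).trans (g.2 i j h).symm
      right_inv := fun f => funext fun p => by
        simp only [IsUnit.unit_spec]
        exact dif_pos p.2 }
  rw [Nat.card_congr e, Nat.card_fun]

variable [Finite R]

variable (R) in
def unitriangular (b : m → α) : Subgroup (GL m R) where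
  carrier := patternSet R fun i j => b i < b j
  one_mem' _ _ _ := rfl
  mul_mem' := mul_mem_patternSet (E := fun i j => b i < b j) lt_trans
  inv_mem' {g} hg := by
    let U : Submonoid (GL m R) :=
      ⟨⟨patternSet R fun i j => b i < b j, mul_mem_patternSet (E := fun i j => b i < b j) lt_trans⟩,
        fun _ _ _ => rfl⟩
    exact Submonoid.powers_le.mpr (show g ∈ U from hg)
      (mem_powers_iff_mem_zpowers.mpr (inv_mem (Subgroup.mem_zpowers g)))

theorem mem_unitriangular {b : m → α} {g : GL m R} :
    g ∈ unitriangular R b ↔ ∀ i j, ¬ b i < b j → (g : Matrix m m R) i j = (1 : Matrix m m R) i j :=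
  Iff.rfl

theorem coe_unitriangular (b : m → α) :
    (unitriangular R b : Set (GL m R)) = patternSet R fun i j => b i < b j :=
  rfl

theorem mem_unitriangular_iff {b : m → α} (hb : Function.Injective b) {g : GL m R} :
    g ∈ unitriangular R b ↔
      (∀ i, (g : Matrix m m R) i i = 1) ∧ ∀ i j, b j < b i → (g : Matrix m m R) i j = 0 := by
  rw [mem_unitriangular]
  refine ⟨fun hg => ⟨fun i => (hg i i (lt_irrefl _)).trans (Matrix.one_apply_eq i),
    fun i j hji => ?_⟩, fun ⟨hdiag, htri⟩ i j hij => ?_⟩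
  · rw [hg i j hji.not_gt, Matrix.one_apply_ne]
    rintro rfl; exact lt_irrefl _ hji
  · by_cases h : i = j
    · subst h; rw [hdiag, Matrix.one_apply_eq]
    · rw [Matrix.one_apply_ne h]
      exact htri i j ((not_lt.mp hij).lt_of_ne (hb.ne (Ne.symm h)))

theorem coe_unitriangular_inf (b : m → α) (c : m → β) :
    ((unitriangular R b ⊓ unitriangular R c : Subgroup (GL m R)) : Set (GL m R)) =
      patternSet R fun i j => b i < b j ∧ c i < c j := by
  ext g
  simp only [SetLike.mem_coe, Subgroup.mem_inf, mem_unitriangular]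
  refine ⟨fun ⟨hb, hc⟩ i j hij => ?_, fun hg => ⟨fun i j hij => hg i j (hij ·.1),
    fun i j hij => hg i j (hij ·.2)⟩⟩
  by_cases h : b i < b j
  · exact hc i j (hij ⟨h, ·⟩)
  · exact hb i j h

theorem disjoint_unitriangular_toDual (c : m → α) :
    Disjoint (unitriangular R c) (unitriangular R (toDual ∘ c)) := by
  refine Subgroup.disjoint_def.mpr fun {g} hg hg' => Units.ext <| Matrix.ext fun i j => ?_
  by_cases h : c i < c j
  · exact mem_unitriangular.mp hg' i j h.not_gt
  · exact mem_unitriangular.mp hg i j h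

theorem splitsAlong_unitriangular (b : m → α) {c : m → β} (hc : Function.Injective c) :
    SplitsAlong (unitriangular R b) (unitriangular R c) (unitriangular R (toDual ∘ c)) where
  disjoint := (disjoint_unitriangular_toDual c).mono inf_le_right inf_le_right
  card_mul_card := by
    have hsplit : Nat.card {p : m × m // b p.1 < b p.2} =
        Nat.card {p : m × m // b p.1 < b p.2 ∧ c p.1 < c p.2} +
          Nat.card {p : m × m // b p.1 < b p.2 ∧ c p.2 < c p.1} := by
      classical
      simp only [Nat.card_eq_fintype_card, Fintype.card_subtype]
      rw [← Finset.card_filter_add_card_filter_not (p := fun p : m × m => c p.1 < c p.2),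
        Finset.filter_filter, Finset.filter_filter]
      congr 2
      refine Finset.filter_congr fun p _ => and_congr_right fun hp => ?_
      have hne : c p.1 ≠ c p.2 := hc.ne fun h => hp.ne (congrArg b h)
      exact ⟨fun h => (not_lt.mp h).lt_of_ne hne.symm, fun h => h.not_gt⟩
    rw [← SetLike.coe_sort_coe, coe_unitriangular_inf, ← SetLike.coe_sort_coe,
      coe_unitriangular_inf, ← SetLike.coe_sort_coe, card_patternSet (fun _ _ h => h.1),
      card_patternSet (fun _ _ h => h.1), coe_unitriangular,
      card_patternSet (fun _ _ h => h), ← pow_add, hsplit]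
    rfl

theorem conj_mem_unitriangular_of_isDiag {b : m → α} {l g : GL m R}
    (hl : (l : Matrix m m R).IsDiag) (hg : g ∈ unitriangular R b) :
    l * g * l⁻¹ ∈ unitriangular R b := by
  set d := Matrix.diag (l : Matrix m m R)
  have hld : (l : Matrix m m R) = Matrix.diagonal d := hl.diagonal_diag.symm
  have hd (j : m) : IsUnit (d j) := by
    refine IsUnit.of_mul_eq_one_right (((l⁻¹ : GL m R) : Matrix m m R) j j) ?_
    have := congrFun₂ (Units.inv_mul l) j j
    rwa [hld, Matrix.mul_diagonal, Matrix.one_apply_eq] at this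
  have hconj : ((l * g * l⁻¹ : GL m R) : Matrix m m R) * Matrix.diagonal d =
      Matrix.diagonal d * (g : Matrix m m R) := by
    rw [← hld, ← Units.val_mul, ← Units.val_mul, inv_mul_cancel_right]
  intro i j hij
  have hij' := congrFun₂ hconj i j
  rw [Matrix.mul_diagonal, Matrix.diagonal_mul, hg i j hij] at hij'
  refine (hd j).mul_left_inj.mp (hij'.trans ?_)
  by_cases h : i = j
  · subst h; rw [Matrix.one_apply_eq, mul_one, one_mul]
  · rw [Matrix.one_apply_ne h, mul_zero, zero_mul]

theorem mem_normalizer_unitriangular_of_isDiag {b : m → α} {l : GL m R}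
    (hl : (l : Matrix m m R).IsDiag) : l ∈ Subgroup.normalizer (unitriangular R b : Set (GL m R)) :=
  Subgroup.mem_normalizer_fintype fun _ => conj_mem_unitriangular_of_isDiag hl

theorem conjSet_unitriangular {w : GL m R} {σ : Equiv.Perm m}
    (hw : (w : Matrix m m R) = σ.permMatrix R) (b : m → α) :
    conjSet (unitriangular R b : Set (GL m R)) w = unitriangular R (b ∘ σ.symm) := by
  ext g
  simp only [conjSet, SetLike.mem_coe, mem_unitriangular,
    coe_conj_of_permMatrix hw, Matrix.submatrix_apply, Function.comp_apply]
  constructor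
  · intro h i j hij
    simpa [Matrix.one_apply] using h (σ.symm i) (σ.symm j) hij
  · intro h i j hij
    simpa [Matrix.one_apply] using h (σ i) (σ j) (by simpa using hij)

end Unitriangular

variable {n : ℕ} {R : Type*} [CommRing R] [Finite R]

theorem Uset_eq : Uset n R = unitriangular R (id : Fin n → Fin n) := by
  ext g
  exact (mem_unitriangular_iff Function.injective_id).symm

theorem Vset_eq : Vset n R = unitriangular R (toDual : Fin n → (Fin n)ᵒᵈ) := by
  ext g
  exact (mem_unitriangular_iff toDual.injective).symm

end PS

open PS in
/-- Right `C[G]`-linearity of `x ↦ e_V x` is automatic; the second clause is the left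
`C[L]`-equivariance. -/
theorem eV_mul_bijOn_general (n : ℕ) (R : Type*) [CommRing R] [Fintype R] [DecidableEq R]
    (w : GL (Fin n) R) (hw : IsW w) :
    Set.BijOn (fun x => eAvg (Vset n R) * x)
      {x : MonoidAlgebra ℂ (GL (Fin n) R) |
        ∃ y, x = eAvg (conjSet (Uset n R) w) * eAvg (conjSet (Vset n R) w) * y}
      {x : MonoidAlgebra ℂ (GL (Fin n) R) | ∃ y, x = eAvg (Vset n R) * eAvg (Uset n R) * y} ∧
    ∀ l : GL (Fin n) R, IsL l → ∀ x : MonoidAlgebra ℂ (GL (Fin n) R),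
      eAvg (Vset n R) * (MonoidAlgebra.of ℂ (GL (Fin n) R) l * x) =
        MonoidAlgebra.of ℂ (GL (Fin n) R) l * (eAvg (Vset n R) * x) := by
  obtain ⟨σ, hσ⟩ := hw
  rw [Uset_eq, Vset_eq, conjSet_unitriangular hσ, conjSet_unitriangular hσ]
  have hσ' : Function.Injective (id ∘ σ.symm) := σ.symm.injective
  refine ⟨bijOn_eAvg_mul_of_splitsAlong (splitsAlong_unitriangular _ hσ')
    (splitsAlong_unitriangular _ hσ') (splitsAlong_unitriangular _ Function.injective_id).symm
    (splitsAlong_unitriangular _ Function.injective_id).symm, fun l hl x => ?_⟩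
  rw [← mul_assoc, ← of_mul_eAvg_of_mem_normalizer (mem_normalizer_unitriangular_of_isDiag
    fun i j => hl i j), mul_assoc]

open PS in
/-- Lemma 3.5: the map `x ↦ e_V x` is an isomorphism of `C[L]`-`C[G]` bimodules from
`e_{U^w} e_{V^w} C[G]` onto `e_V e_U C[G]`.  (Right `C[G]`-linearity of left multiplication
is automatic; left `C[L]`-equivariance is the second clause.) -/
theorem eV_mul_bijOn (n : ℕ) (R : Type*) [CommRing R] [IsLocalRing R] [Fintype R] [DecidableEq R]
    (w : GL (Fin n) R) (hw : IsW w) :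
    Set.BijOn (fun x => eAvg (Vset n R) * x)
      {x : MonoidAlgebra ℂ (GL (Fin n) R) |
        ∃ y, x = eAvg (conjSet (Uset n R) w) * eAvg (conjSet (Vset n R) w) * y}
      {x : MonoidAlgebra ℂ (GL (Fin n) R) | ∃ y, x = eAvg (Vset n R) * eAvg (Uset n R) * y} ∧
    ∀ l : GL (Fin n) R, IsL l → ∀ x : MonoidAlgebra ℂ (GL (Fin n) R),
      eAvg (Vset n R) * (MonoidAlgebra.of ℂ (GL (Fin n) R) l * x) =
        MonoidAlgebra.of ℂ (GL (Fin n) R) l * (eAvg (Vset n R) * x) :=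
  eV_mul_bijOn_general n R w hw
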